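/- For every commutative ring A, the group of units of the Laurent series ring A((t)) decomposes uniquely as a product: every f in A((t))* can be written uniquely as f = f_- · a · t^n · f_+ where (on each connected component of Spec A) n is an integer, a ∈ A*, f_+ = 1 + Σ_{l>0} a_l t^l with a_l ∈ A, and f_- = 1 + Σ_{l<0} a_l t^l with each a_l nilpotent and almost all zero. In particular, if A is a local (or connected) commutative ring, every invertible Laurent series over A admits such a unique factorization. -/

import Mathlib

/-!
For a prime `p` of `A`, the order of the image of `f` in `(A ⧸ p)((t))` is additive on units,
and it can only grow when `p` is enlarged; applied to `f` and `f⁻¹` this shows that all primes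
inside a common prime give the same order. In a local ring every prime lies in the maximal
ideal, so the order `n` of `f` modulo the maximal ideal is its order modulo every prime: the
coefficient `aₙ` is a unit and the coefficients below `n` lie in every prime, i.e. are nilpotent.

Dividing by `aₙ tⁿ` leaves a series `h` with constant coefficient `1` and finitely many
nilpotent negative coefficients, which generate a nilpotent ideal `I`. Splitting off the power
series part of `h` and then the negative part of the remainder leaves a series whose negative
coefficients lie in `I²`; iterating this terminates.

For uniqueness, `n` is the order of `f` modulo any prime, and if `(1 + e) X = (1 + e') Y` with
`e, e'` supported in negative degrees and `X, Y` power series, then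
`(1 + e')⁻¹ (1 + e) = Y X⁻¹` is a power series in `1 + t⁻¹ A[t⁻¹]`, hence `1`.
-/

open HahnSeries

theorem Ideal.IsNilpotent.isNilpotent_of_mem {R : Type*} [CommSemiring R] {I : Ideal R}
    (hI : IsNilpotent I) {a : R} (ha : a ∈ I) : IsNilpotent a :=
  let ⟨n, hn⟩ := hI
  ⟨n, by simpa [hn] using Ideal.pow_mem_pow ha n⟩

namespace HahnSeries

variable {Γ R S : Type*} [AddCommMonoid Γ] [PartialOrder Γ] [IsOrderedCancelAddMonoid Γ]
  [CommRing R] [CommRing S]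

def coeffIdeal (I : Ideal R) : Ideal R⟦Γ⟧ where
  carrier := {x | ∀ i, x.coeff i ∈ I}
  zero_mem' _ := I.zero_mem
  add_mem' hx hy i := I.add_mem (hx i) (hy i)
  smul_mem' c x hx i := by
    rw [smul_eq_mul, coeff_mul]
    exact I.sum_mem fun ij _ => I.mul_mem_left _ (hx ij.2)

section coeffIdeal

variable {I J : Ideal R} {x y : R⟦Γ⟧}

theorem mem_coeffIdeal : x ∈ coeffIdeal I ↔ ∀ i, x.coeff i ∈ I := Iff.rfl

theorem coeffIdeal_mono (h : I ≤ J) : coeffIdeal (Γ := Γ) I ≤ coeffIdeal J :=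
  fun _ hx i => h (hx i)

theorem mul_mem_coeffIdeal_mul (hx : x ∈ coeffIdeal I) (hy : y ∈ coeffIdeal J) :
    x * y ∈ coeffIdeal (I * J) := fun i => by
  rw [coeff_mul]
  exact Ideal.sum_mem _ fun ij _ => Ideal.mul_mem_mul (hx ij.1) (hy ij.2)

theorem pow_mem_coeffIdeal_pow (hx : x ∈ coeffIdeal I) (n : ℕ) :
    x ^ n ∈ coeffIdeal (I ^ n) := by
  induction n with
  | zero => simp [Ideal.one_eq_top, mem_coeffIdeal]
  | succ n ih => rw [pow_succ, pow_succ]; exact mul_mem_coeffIdeal_mul ih hx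

theorem isNilpotent_of_mem_coeffIdeal (hI : IsNilpotent I) (hx : x ∈ coeffIdeal I) :
    IsNilpotent x := by
  obtain ⟨n, hn⟩ := hI
  refine ⟨n, ?_⟩
  ext i
  simpa [hn] using pow_mem_coeffIdeal_pow hx n i

end coeffIdeal

def mapRingHom (φ : R →+* S) : R⟦Γ⟧ →+* S⟦Γ⟧ where
  toFun x := x.map φ
  map_one' := HahnSeries.map_one φ.toMonoidWithZeroHom
  map_mul' _ _ := HahnSeries.map_mul (φ : R →ₙ+* S)
  map_zero' := HahnSeries.map_zero (φ : ZeroHom R S)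
  map_add' _ _ := by ext; simp

@[simp]
theorem coeff_mapRingHom (φ : R →+* S) (x : R⟦Γ⟧) (i : Γ) :
    (mapRingHom φ x).coeff i = φ (x.coeff i) := rfl

end HahnSeries

namespace LaurentSeries

variable {A : Type*} [CommRing A] {x y e e' X Y : LaurentSeries A} {I : Ideal A}

theorem coeff_mul_eq_zero_of_gt {a b : ℤ} (hx : ∀ i, a < i → x.coeff i = 0)
    (hy : ∀ i, b < i → y.coeff i = 0) {i : ℤ} (hi : a + b < i) : (x * y).coeff i = 0 := by
  by_contra h
  obtain ⟨j, hj, k, hk, rfl⟩ := Set.mem_add.mp (support_mul_subset (mem_support _ _ |>.mpr h))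
  have := not_lt.mp fun hlt => hj (hx j hlt)
  have := not_lt.mp fun hlt => hk (hy k hlt)
  omega

-- Supports of Laurent series are bounded below, so these are `A[t⁻¹]` and `t⁻¹ A[t⁻¹]`.
variable (A) in
def nonposSubring : Subring (LaurentSeries A) where
  carrier := {x | ∀ i, 0 < i → x.coeff i = 0}
  mul_mem' hx hy _ hi := coeff_mul_eq_zero_of_gt hx hy (by simpa using hi)
  one_mem' i hi := by simp [coeff_one, hi.ne']
  add_mem' hx hy i hi := by simp [hx i hi, hy i hi]
  zero_mem' _ _ := rfl
  neg_mem' hx i hi := by simp [hx i hi]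

variable (A) in
def negSubring : NonUnitalSubring (LaurentSeries A) where
  carrier := {x | ∀ i, 0 ≤ i → x.coeff i = 0}
  mul_mem' hx hy _ hi :=
    coeff_mul_eq_zero_of_gt (a := -1) (b := -1) (fun i h => hx i (by omega))
      (fun i h => hy i (by omega)) (by omega)
  add_mem' hx hy i hi := by simp [hx i hi, hy i hi]
  zero_mem' _ _ := rfl
  neg_mem' hx i hi := by simp [hx i hi]

variable (A) in
noncomputable abbrev powerSeriesSubring : Subring (LaurentSeries A) := (ofPowerSeries ℤ A).range

theorem mul_mem_negSubring (hx : x ∈ negSubring A) (hy : y ∈ nonposSubring A) :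
    x * y ∈ negSubring A := fun _ hi =>
  coeff_mul_eq_zero_of_gt (a := -1) (fun i h => hx i (by omega)) hy (by omega)

theorem mem_powerSeriesSubring_iff :
    x ∈ powerSeriesSubring A ↔ ∀ i < 0, x.coeff i = 0 := by
  refine ⟨?_, fun hx => ⟨PowerSeries.mk fun n => x.coeff n, ?_⟩⟩
  · rintro ⟨F, rfl⟩ i hi
    rw [PowerSeries.coeff_coe, if_pos hi]
  · ext i
    rw [PowerSeries.coeff_coe]
    split_ifs with hi
    · exact (hx i hi).symm
    · rw [PowerSeries.coeff_mk, Int.natAbs_of_nonneg (not_lt.mp hi)]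

theorem eq_zero_of_mem_negSubring_of_mem_powerSeriesSubring (hn : x ∈ negSubring A)
    (hp : x ∈ powerSeriesSubring A) : x = 0 := by
  ext i
  rcases lt_or_ge i 0 with hi | hi
  · exact mem_powerSeriesSubring_iff.mp hp i hi
  · exact hn i hi

theorem exists_mul_eq_one_of_mem_powerSeriesSubring (hx : x ∈ powerSeriesSubring A)
    (h0 : IsUnit (x.coeff 0)) : ∃ y ∈ powerSeriesSubring A, x * y = 1 := by
  obtain ⟨F, rfl⟩ := hx
  obtain ⟨u, rfl⟩ : IsUnit F := by
    rw [PowerSeries.isUnit_iff_constantCoeff]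
    simpa [PowerSeries.coeff_coe] using h0
  exact ⟨_, ⟨↑u⁻¹, rfl⟩, by rw [← map_mul, u.mul_inv, map_one]⟩

theorem exists_one_add_mul_one_add_eq_one (he : e ∈ negSubring A) (hnil : IsNilpotent e) :
    ∃ w ∈ negSubring A, w ∈ Ideal.span {e} ∧ (1 + e) * (1 + w) = 1 := by
  let e' : nonposSubring A := ⟨e, fun i hi => he i hi.le⟩
  have hu : IsUnit (1 + e') := by
    refine IsNilpotent.isUnit_one_add ?_
    obtain ⟨n, hn⟩ := hnil
    exact ⟨n, Subtype.ext (by simpa using hn)⟩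
  let u : nonposSubring A := ↑hu.unit⁻¹
  have hue : (1 + e) * u = 1 := by
    have := congrArg Subtype.val hu.mul_val_inv
    rwa [Subring.coe_mul, Subring.coe_add, Subring.coe_one] at this
  refine ⟨-(e * u), neg_mem (mul_mem_negSubring he u.2),
    neg_mem (Ideal.mul_mem_right _ _ (Ideal.mem_span_singleton_self e)), ?_⟩
  linear_combination (-e) * hue

theorem truncLT_mem_negSubring (x : LaurentSeries A) : truncLT 0 x ∈ negSubring A :=
  fun _ hi => coeff_truncLT_of_le hi x

theorem sub_truncLT_mem_powerSeriesSubring (x : LaurentSeries A) :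
    x - truncLT 0 x ∈ powerSeriesSubring A :=
  mem_powerSeriesSubring_iff.mpr fun i hi => by simp [hi]

theorem truncLT_mem_coeffIdeal (hx : ∀ i < 0, x.coeff i ∈ I) : truncLT 0 x ∈ coeffIdeal I :=
  fun i => by
    rw [HahnSeries.coeff_truncLT]
    split_ifs with hi
    exacts [hx i hi, I.zero_mem]

theorem exists_isNilpotent_ideal (x : LaurentSeries A) (hx : ∀ i < 0, IsNilpotent (x.coeff i)) :
    ∃ I : Ideal A, IsNilpotent I ∧ ∀ i < 0, x.coeff i ∈ I := by
  let S := {i | i < 0 ∧ x.coeff i ≠ 0}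
  have hS : S.Finite := (Set.finite_Ico x.order 0).subset fun i hi =>
    ⟨order_le_of_coeff_ne_zero hi.2, hi.1⟩
  refine ⟨Ideal.span (x.coeff '' S), ?_, fun i hi => ?_⟩
  · have hfg : (Ideal.span (x.coeff '' S)).FG := Submodule.fg_span (hS.image _)
    refine hfg.isNilpotent_iff_le_nilradical.mpr ?_
    rw [Ideal.span_le]
    rintro _ ⟨i, hi, rfl⟩
    exact mem_nilradical.mpr (hx i hi.1)
  · by_cases h0 : x.coeff i = 0
    · rw [h0]; exact Ideal.zero_mem _
    · exact Ideal.subset_span ⟨i, ⟨hi, h0⟩, rfl⟩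

theorem sub_one_mem_negSubring (h₁ : ∀ l : ℤ, 0 < l → x.coeff l = 0)
    (h₀ : x.coeff 0 = 1) : x - 1 ∈ negSubring A := fun i hi => by
  rcases hi.lt_or_eq with hi | rfl
  · simp [h₁ i hi, hi.ne']
  · simp [h₀]

theorem isNilpotent_of_mem_negSubring (he : e ∈ negSubring A)
    (hnil : ∀ i < 0, IsNilpotent (e.coeff i)) : IsNilpotent e := by
  obtain ⟨I, hI, heI⟩ := exists_isNilpotent_ideal e hnil
  refine isNilpotent_of_mem_coeffIdeal hI fun i => ?_
  rcases lt_or_ge i 0 with hi | hi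
  · exact heI i hi
  · rw [he i hi]
    exact I.zero_mem

theorem exists_eq_one_add_mul_mul (hI : IsNilpotent I) {g : LaurentSeries A}
    (hg0 : IsUnit (g.coeff 0)) (hg : ∀ i < 0, g.coeff i ∈ I) :
    ∃ e ∈ negSubring A, e ∈ coeffIdeal I ∧ ∃ v, IsUnit (v.coeff 0) ∧
      (∀ i < 0, v.coeff i ∈ I ^ 2) ∧ ∃ p ∈ powerSeriesSubring A, g = (1 + e) * v * p := by
  obtain ⟨r, -, hr⟩ :=
    exists_mul_eq_one_of_mem_powerSeriesSubring (sub_truncLT_mem_powerSeriesSubring g)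
      (by simpa using hg0)
  -- `g = (g - truncLT 0 g) * (1 + δ)`; splitting off `1 + truncLT 0 δ` from `1 + δ` leaves
  -- negative coefficients in `I * I`
  obtain ⟨δ, hδdef⟩ : ∃ δ, r * truncLT 0 g = δ := ⟨_, rfl⟩
  have hδ : δ ∈ coeffIdeal I := hδdef ▸ Ideal.mul_mem_left _ _ (truncLT_mem_coeffIdeal hg)
  have hε : truncLT 0 δ ∈ coeffIdeal I := truncLT_mem_coeffIdeal fun i _ => hδ i
  obtain ⟨w, -, hwε, hw⟩ := exists_one_add_mul_one_add_eq_one (truncLT_mem_negSubring δ)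
    (isNilpotent_of_mem_coeffIdeal hI hε)
  have hwI : w ∈ coeffIdeal I := (Ideal.span_singleton_le_iff_mem _).mpr hε hwε
  have hη : δ - truncLT 0 δ ∈ coeffIdeal I := sub_mem hδ hε
  have hv : (1 + w) * (1 + δ) = 1 + ((δ - truncLT 0 δ) + w * (δ - truncLT 0 δ)) := by
    linear_combination hw
  refine ⟨truncLT 0 δ, truncLT_mem_negSubring δ, hε, (1 + w) * (1 + δ), ?_, fun i hi => ?_,
    g - truncLT 0 g, sub_truncLT_mem_powerSeriesSubring g, ?_⟩
  · rw [hv, coeff_add, coeff_one, if_pos rfl]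
    exact (Ideal.IsNilpotent.isNilpotent_of_mem hI
      (add_mem hη (Ideal.mul_mem_left _ w hη) 0)).isUnit_one_add
  · rw [hv, coeff_add, coeff_add, coeff_one, if_neg hi.ne,
      mem_powerSeriesSubring_iff.mp (sub_truncLT_mem_powerSeriesSubring δ) i hi, zero_add,
      zero_add, sq]
    exact mul_mem_coeffIdeal_mul hwI hη i
  · linear_combination (-(1 + δ) * (g - truncLT 0 g)) * hw - truncLT 0 g * hr +
      (g - truncLT 0 g) * hδdef

theorem exists_eq_one_add_mul_of_pow_eq_bot (m : ℕ) : ∀ I : Ideal A, I ^ m = ⊥ →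
    ∀ g : LaurentSeries A, IsUnit (g.coeff 0) → (∀ i < 0, g.coeff i ∈ I) →
    ∃ e ∈ negSubring A, e ∈ coeffIdeal I ∧
      ∃ p ∈ powerSeriesSubring A, g = (1 + e) * p := by
  induction m using Nat.strong_induction_on with
  | _ m ih =>
  intro I hI g hg0 hg
  by_cases hm : m ≤ 1
  · have hI : I = ⊥ := le_bot_iff.mp (hI ▸ by interval_cases m <;> simp)
    refine ⟨0, zero_mem _, zero_mem _, g, mem_powerSeriesSubring_iff.mpr fun i hi => ?_,
      by simp⟩
    simpa [hI] using hg i hi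
  obtain ⟨e, he, heI, v, hv0, hv, p, hp, rfl⟩ := exists_eq_one_add_mul_mul ⟨m, hI⟩ hg0 hg
  have hI2 : (I ^ 2) ^ (m - 1) = ⊥ := by
    rw [← pow_mul]
    exact le_bot_iff.mp (hI ▸ Ideal.pow_le_pow_right (by omega))
  obtain ⟨e', he', he'I, p', hp', rfl⟩ := ih (m - 1) (by omega) _ hI2 v hv0 hv
  refine ⟨e + e' + e * e', add_mem (add_mem he he') (mul_mem he he'),
    add_mem (add_mem heI (coeffIdeal_mono (Ideal.pow_le_self two_ne_zero) he'I))
      (Ideal.mul_mem_right _ _ heI), p' * p, mul_mem hp' hp, by ring⟩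

theorem exists_eq_one_add_mul {h : LaurentSeries A} (h0 : h.coeff 0 = 1)
    (hneg : ∀ i < 0, IsNilpotent (h.coeff i)) :
    ∃ e ∈ negSubring A, (∀ i, IsNilpotent (e.coeff i)) ∧
      ∃ p ∈ powerSeriesSubring A, IsUnit (p.coeff 0) ∧ h = (1 + e) * p := by
  obtain ⟨I, ⟨m, hm⟩, hI⟩ := exists_isNilpotent_ideal h hneg
  obtain ⟨e, he, heI, p, hp, rfl⟩ :=
    exists_eq_one_add_mul_of_pow_eq_bot m I hm h (h0 ▸ isUnit_one) hI
  have hnil {a : A} (ha : a ∈ I) : IsNilpotent a :=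
    Ideal.IsNilpotent.isNilpotent_of_mem ⟨m, hm⟩ ha
  refine ⟨e, he, fun i => hnil (heI i), p, hp, ?_, rfl⟩
  have : p.coeff 0 = 1 - (e * p).coeff 0 := by rw [← h0]; simp [add_mul]
  rw [this]
  exact (hnil (Ideal.mul_mem_right _ _ heI 0)).isUnit_one_sub

theorem eq_of_one_add_mul_eq_one_add_mul (he : e ∈ negSubring A) (he' : e' ∈ negSubring A)
    (hnil : IsNilpotent e') (hX : X ∈ powerSeriesSubring A) (hX0 : IsUnit (X.coeff 0))
    (hY : Y ∈ powerSeriesSubring A) (h : (1 + e) * X = (1 + e') * Y) : e = e' ∧ X = Y := by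
  obtain ⟨w, hw, -, hw1⟩ := exists_one_add_mul_one_add_eq_one he' hnil
  obtain ⟨r, hr, hXr⟩ := exists_mul_eq_one_of_mem_powerSeriesSubring hX hX0
  have hz : w + e + w * e = Y * r - 1 := by
    linear_combination (-(1 + w) * (1 + e)) * hXr + (1 + w) * r * h + Y * r * hw1
  have h0 : w + e + w * e = 0 := eq_zero_of_mem_negSubring_of_mem_powerSeriesSubring
    (add_mem (add_mem hw he) (mul_mem hw he)) (hz ▸ sub_mem (mul_mem hY hr) (one_mem _))
  obtain rfl : e = e' := by linear_combination (1 + e') * h0 - (1 + e) * hw1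
  exact ⟨rfl, by linear_combination (1 + w) * h + (Y - X) * h0⟩

theorem smul_single_one (a : A) (n : ℤ) : a • single n (1 : A) = single n a := by
  ext; simp [coeff_single]

theorem order_eq_zero_of_coeff_zero_ne_zero (h : ∀ i < 0, x.coeff i = 0) (h0 : x.coeff 0 ≠ 0) :
    x.order = 0 := by
  refine le_antisymm (order_le_of_coeff_ne_zero h0) (not_lt.mp fun hlt => ?_)
  exact ne_zero_of_coeff_ne_zero h0 (coeff_order_eq_zero.mp (h _ hlt))

theorem mapRingHom_eq_one {B : Type*} [CommRing B] [IsReduced B] (φ : A →+* B)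
    (h₁ : ∀ l : ℤ, 0 < l → x.coeff l = 0) (h₀ : x.coeff 0 = 1)
    (hnil : ∀ l : ℤ, l < 0 → IsNilpotent (x.coeff l)) : mapRingHom φ x = 1 := by
  ext i
  rw [coeff_mapRingHom, coeff_one]
  rcases lt_trichotomy i 0 with hi | rfl | hi
  · rw [if_neg hi.ne]
    exact ((hnil i hi).map φ).eq_zero
  · simp [h₀]
  · simp [h₁ i hi, hi.ne']

noncomputable def orderMod (p : Ideal A) (x : LaurentSeries A) : ℤ :=
  (mapRingHom (Ideal.Quotient.mk p) x).order

theorem orderMod_add_orderMod (p : Ideal A) [p.IsPrime] (hxy : x * y = 1) :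
    orderMod p x + orderMod p y = 0 := by
  have h := congrArg (mapRingHom (Ideal.Quotient.mk p)) hxy
  rw [map_mul, map_one] at h
  rw [orderMod, orderMod, ← order_mul (left_ne_zero_of_mul_eq_one h)
    (right_ne_zero_of_mul_eq_one h), h, order_one]

theorem orderMod_le_of_le {p q : Ideal A} (hpq : p ≤ q)
    (hx : mapRingHom (Ideal.Quotient.mk q) x ≠ 0) : orderMod p x ≤ orderMod q x := by
  refine order_le_of_coeff_ne_zero fun h => hx (coeff_order_eq_zero.mp ?_)
  rw [coeff_mapRingHom, Ideal.Quotient.eq_zero_iff_mem] at h ⊢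
  exact hpq h

theorem orderMod_eq_of_le {p q : Ideal A} [p.IsPrime] [q.IsPrime] (hpq : p ≤ q) (hx : IsUnit x) :
    orderMod p x = orderMod q x := by
  obtain ⟨u, rfl⟩ := hx
  have hne {z : LaurentSeries A} (hz : IsUnit z) : mapRingHom (Ideal.Quotient.mk q) z ≠ 0 :=
    (hz.map _).ne_zero
  have := orderMod_le_of_le hpq (hne u.isUnit)
  have := orderMod_le_of_le hpq (hne u⁻¹.isUnit)
  have := orderMod_add_orderMod p u.mul_inv
  have := orderMod_add_orderMod q u.mul_inv
  omega

section IsLocalRing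

variable [IsLocalRing A]

theorem isUnit_coeff_orderMod (hx : IsUnit x) :
    IsUnit (x.coeff (orderMod (IsLocalRing.maximalIdeal A) x)) := by
  rw [← IsLocalRing.notMem_maximalIdeal, ← Ideal.Quotient.eq_zero_iff_mem]
  exact fun h => (hx.map (mapRingHom (Ideal.Quotient.mk _))).ne_zero (coeff_order_eq_zero.mp h)

theorem isNilpotent_coeff_of_lt_orderMod (hx : IsUnit x) {i : ℤ}
    (hi : i < orderMod (IsLocalRing.maximalIdeal A) x) : IsNilpotent (x.coeff i) := by
  refine nilpotent_iff_mem_prime.mpr fun p hp => ?_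
  rw [← orderMod_eq_of_le (IsLocalRing.le_maximalIdeal hp.ne_top) hx] at hi
  exact Ideal.Quotient.eq_zero_iff_mem.mp (coeff_eq_zero_of_lt_order hi)

end IsLocalRing

def IsUnitFactorization (f : LaurentSeries A) (n : ℤ) (a : Aˣ) (fp fm : LaurentSeries A) :
    Prop :=
  (∀ l : ℤ, l < 0 → fp.coeff l = 0) ∧ fp.coeff 0 = 1 ∧
  (∀ l : ℤ, 0 < l → fm.coeff l = 0) ∧ fm.coeff 0 = 1 ∧
  (∀ l : ℤ, l < 0 → IsNilpotent (fm.coeff l)) ∧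
  f = fm * ((a : A) • single n (1 : A)) * fp

namespace IsUnitFactorization

variable {f fp fm fp' fm' : LaurentSeries A} {n n' : ℤ} {a a' : Aˣ}

theorem orderMod_eq (h : IsUnitFactorization f n a fp fm) (p : Ideal A) [p.IsPrime] :
    orderMod p f = n := by
  obtain ⟨hp₁, hp₀, hm₁, hm₀, hmnil, rfl⟩ := h
  have hsingle : mapRingHom (Ideal.Quotient.mk p) ((a : A) • single n 1) =
      single n (Ideal.Quotient.mk p a) := by
    ext i
    simp only [coeff_mapRingHom, smul_single_one, coeff_single]
    split_ifs <;> simp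
  have hfp : (mapRingHom (Ideal.Quotient.mk p) fp).coeff 0 ≠ 0 := by simp [hp₀]
  have ha : Ideal.Quotient.mk p (a : A) ≠ 0 := (a.isUnit.map _).ne_zero
  rw [orderMod, map_mul, map_mul, mapRingHom_eq_one _ hm₁ hm₀ hmnil, one_mul, hsingle,
    order_mul (single_ne_zero ha) (ne_zero_of_coeff_ne_zero hfp), order_single ha,
    order_eq_zero_of_coeff_zero_ne_zero (fun i hi => by simp [hp₁ i hi]) hfp, add_zero]

theorem unique [Nontrivial A] (h : IsUnitFactorization f n a fp fm)
    (h' : IsUnitFactorization f n' a' fp' fm') : (n, a, fp, fm) = (n', a', fp', fm') := by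
  obtain ⟨p, hp⟩ := Ideal.exists_maximal A
  obtain rfl : n = n' := (h.orderMod_eq p).symm.trans (h'.orderMod_eq p)
  obtain ⟨hp₁, hp₀, hm₁, hm₀, -, hf⟩ := h
  obtain ⟨hp₁', hp₀', hm₁', hm₀', hmnil', hf'⟩ := h'
  have hshift (a : Aˣ) (fp fm : LaurentSeries A) :
      fm * ((a : A) • single n 1) * fp * single (-n) 1 = (1 + (fm - 1)) * (C (a : A) * fp) := by
    have hs : single n (a : A) * single (-n) 1 = C (a : A) := by
      rw [single_mul_single, add_neg_cancel, mul_one, C_apply]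
    rw [smul_single_one]
    linear_combination (fm * fp) * hs
  have hC (a : Aˣ) {fp : LaurentSeries A} (hp₁ : ∀ l : ℤ, l < 0 → fp.coeff l = 0) :
      C (a : A) * fp ∈ powerSeriesSubring A :=
    mul_mem ⟨PowerSeries.C (a : A), ofPowerSeries_C _⟩ (mem_powerSeriesSubring_iff.mpr hp₁)
  obtain ⟨hm, hX⟩ := eq_of_one_add_mul_eq_one_add_mul (sub_one_mem_negSubring hm₁ hm₀)
    (sub_one_mem_negSubring hm₁' hm₀')
    (isNilpotent_of_mem_negSubring (sub_one_mem_negSubring hm₁' hm₀')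
      fun i hi => by simpa [hi.ne] using hmnil' i hi)
    (hC a hp₁) (by simp [C_apply, hp₀]) (hC a' hp₁')
    (by rw [← hshift, ← hshift, ← hf, ← hf'])
  obtain rfl : a = a' :=
    Units.ext (by simpa [C_apply, hp₀, hp₀'] using congrArg (coeff · 0) hX)
  obtain rfl : fp = fp' := by
    ext i
    simpa [C_apply] using congrArg (coeff · i) hX
  rw [sub_left_inj.mp hm]

end IsUnitFactorization

theorem exists_isUnitFactorization [IsLocalRing A] {f : LaurentSeries A} (hf : IsUnit f) :
    ∃ n a fp fm, IsUnitFactorization f n a fp fm := by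
  set n := orderMod (IsLocalRing.maximalIdeal A) f
  set c := (isUnit_coeff_orderMod hf).unit
  have hh (i : ℤ) : (single (-n) (↑c⁻¹ : A) * f).coeff i = ↑c⁻¹ * f.coeff (i + n) := by
    simpa using coeff_single_mul_add (a := i + n) (b := -n) (r := (↑c⁻¹ : A)) (x := f)
  obtain ⟨e, he, henil, p, hp, hp0, hep⟩ := exists_eq_one_add_mul
    (h := single (-n) (↑c⁻¹ : A) * f) (by rw [hh, zero_add]; exact c.inv_mul) fun i hi => by
      rw [hh]
      exact (Commute.all _ _).isNilpotent_mul_left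
        (isNilpotent_coeff_of_lt_orderMod hf (i := i + n) (by omega))
  set b := hp0.unit
  refine ⟨n, c * b, single 0 (↑b⁻¹ : A) * p, 1 + e, fun l hl => ?_, ?_, fun l hl => ?_, ?_,
    fun l hl => ?_, ?_⟩
  · rw [coeff_single_zero_mul, mem_powerSeriesSubring_iff.mp hp l hl, mul_zero]
  · rw [coeff_single_zero_mul]
    exact hp0.val_inv_mul
  · simp [he l hl.le, hl.ne']
  · simp [he 0 le_rfl]
  · simpa [hl.ne] using henil l
  · have hf' : f = single n (c : A) * ((1 + e) * p) := by
      rw [← hep, ← mul_assoc, single_mul_single, add_neg_cancel, c.mul_inv, single_zero_one,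
        one_mul]
    have hs : single n (↑(c * b) : A) * single 0 (↑b⁻¹ : A) = single n (c : A) := by
      rw [single_mul_single, add_zero, Units.val_mul, mul_assoc, b.mul_inv, mul_one]
    rw [smul_single_one, hf']
    linear_combination (-(1 + e) * p) * hs

end LaurentSeries

/-- unique factorization of invertible Laurent series over a local ring:
`f = f₋ · (a · tⁿ) · f₊` with `a ∈ Aˣ`, `f₊ = 1 + Σ_{l>0} a_l t^l`,
`f₋ = 1 + Σ_{l<0} a_l t^l` with nilpotent coefficients. -/
theorem laurent_units_unique_factorization (A : Type*) [CommRing A] [IsLocalRing A]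
    (f : (LaurentSeries A)ˣ) :
    ∃! q : ℤ × Aˣ × LaurentSeries A × LaurentSeries A,
      (∀ l : ℤ, l < 0 → q.2.2.1.coeff l = 0) ∧ q.2.2.1.coeff 0 = 1 ∧
      (∀ l : ℤ, 0 < l → q.2.2.2.coeff l = 0) ∧ q.2.2.2.coeff 0 = 1 ∧
      (∀ l : ℤ, l < 0 → IsNilpotent (q.2.2.2.coeff l)) ∧
      (f : LaurentSeries A) =
        q.2.2.2 * ((q.2.1 : A) • (HahnSeries.single q.1 (1 : A))) * q.2.2.1 := by
  obtain ⟨n, a, fp, fm, h⟩ := LaurentSeries.exists_isUnitFactorization f.isUnit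
  exact ⟨(n, a, fp, fm), h, fun q hq => LaurentSeries.IsUnitFactorization.unique hq h⟩
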